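/- Let G be the group with generators x₁, x₂, x₃, x₅ and relations given by the cyclic relations [x₁,x₂,x₃] = e, [x₃,x₁,x₅] = e, and [x₁,x₂,x₅] = e. Then G is not abelian. -/
import Mathlib


open FreeGroup

/-- The two relators expressing the cyclic relation `[a,b,c] = e`,
i.e. `c*b*a = b*a*c` and `b*a*c = a*c*b`. -/
def cyc {α : Type*} (a b c : FreeGroup α) : Set (FreeGroup α) :=
  {c * b * a * (b * a * c)⁻¹, b * a * c * (a * c * b)⁻¹}

/-- Relators of `M₃^cf`: generators `x₁, x₂, x₃, x₅` are indexed by `0, 1, 2, 3`.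
The relations are `[x₁,x₂,x₃] = e`, `[x₃,x₁,x₅] = e`, `[x₁,x₂,x₅] = e`. -/
def M3cfRels : Set (FreeGroup (Fin 4)) :=
  cyc (of 0) (of 1) (of 2) ∪ cyc (of 2) (of 0) (of 3) ∪ cyc (of 0) (of 1) (of 3)

/-- The hypothetical conjugation-free group `M₃^cf`. -/
def M3cf : Type := PresentedGroup M3cfRels

instance : Group M3cf := by unfold M3cf; infer_instance

/- Auxiliary material: a homomorphism from `M₃^cf` to a nonabelian finite group
(unitriangular 4×4 matrices over `ZMod 2`, a Heisenberg-type class-2 group). -/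

abbrev Mtx := Matrix (Fin 4) (Fin 4) (ZMod 2)

def mk' (a c b d z : ZMod 2) : Mtx := !![1,a,c,z; 0,1,0,b; 0,0,1,d; 0,0,0,1]

def g : Fin 4 → Mtxˣ
  | 0 => ⟨mk' 1 0 0 0 0, mk' 1 0 0 0 0, by decide, by decide⟩
  | 1 => ⟨mk' 0 0 1 0 0, mk' 0 0 1 0 0, by decide, by decide⟩
  | 2 => ⟨mk' 1 1 1 0 0, mk' 1 1 1 0 1, by decide, by decide⟩
  | 3 => ⟨mk' 1 0 1 1 0, mk' 1 0 1 1 1, by decide, by decide⟩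

lemma hrel : ∀ r ∈ M3cfRels, FreeGroup.lift g r = 1 := by
  intro r hr
  simp only [M3cfRels, cyc, Set.mem_union, Set.mem_insert_iff, Set.mem_singleton_iff] at hr
  rcases hr with ((h|h)|(h|h))|(h|h) <;> subst h <;>
    simp only [_root_.map_mul, _root_.map_inv, FreeGroup.lift_apply_of] <;>
    exact Units.ext (by decide)

/-- `M₃^cf` is not abelian. -/
theorem M3cf_not_abelian : ¬ (∀ a b : M3cf, a * b = b * a) := by
  intro h
  have h' : ∀ a b : PresentedGroup M3cfRels, a * b = b * a := h
  have := congrArg (PresentedGroup.toGroup hrel) (h' (.of 0) (.of 1))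
  simp only [_root_.map_mul, PresentedGroup.toGroup.of] at this
  exact absurd (congrArg Units.val this) (by decide)
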